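/- The partial isometries S_i := A†_i for i ∈ {0,1,...,n} satisfy the Cuntz–Krieger relations for the lower triangular matrix A with a_{ij} = 1 if j ≤ i and 0 otherwise: their range projections P_i = A†_i A_i are mutually orthogonal, and their support projections satisfy Q_i = A_i A†_i = Σ_j a_{ij} P_j. -/
import Mathlib


open scoped Classical

/-- `i` is the top (leftmost) index of the weakly monotone basis tensor labelled
by the multiplicity function `k : Fin n → ℕ` (the basis vector
`e_n^{k (n-1)} ⊗ ⋯ ⊗ e_1^{k 0}`, the vacuum `Ω` corresponding to `k = 0`). -/
def WMTop {n : ℕ} (i : Fin n) (k : Fin n → ℕ) : Prop :=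
  0 < k i ∧ ∀ j, i < j → k j = 0

/-- One may create `e i` on the left of the basis tensor labelled by `k`:
every index strictly above `i` has multiplicity zero. -/
def WMCanCreate {n : ℕ} (i : Fin n) (k : Fin n → ℕ) : Prop :=
  ∀ j, i < j → k j = 0

/-- Decrease by one the multiplicity of `e i`. -/
def wmDec {n : ℕ} (k : Fin n → ℕ) (i : Fin n) : Fin n → ℕ :=
  Function.update k i (k i - 1)

/-- Increase by one the multiplicity of `e i`. -/
def wmInc {n : ℕ} (k : Fin n → ℕ) (i : Fin n) : Fin n → ℕ :=
  Function.update k i (k i + 1)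

/-- Auxiliary: `E k` lies in the range of the `i`-th Cuntz–Krieger partial isometry. -/
def CKT {n : ℕ} (i : Fin (n + 1)) (k : Fin n → ℕ) : Prop :=
  Fin.cases (k = 0) (fun i' => WMTop i' k) i

/-- Auxiliary: `E k` lies in the support of the `i`-th Cuntz–Krieger partial isometry. -/
def CKC {n : ℕ} (i : Fin (n + 1)) (k : Fin n → ℕ) : Prop :=
  Fin.cases (k = 0) (fun i' => WMCanCreate i' k) i

lemma CKT_zero {n : ℕ} (k : Fin n → ℕ) : CKT 0 k ↔ k = 0 := Iff.rfl
lemma CKT_succ {n : ℕ} (i : Fin n) (k : Fin n → ℕ) : CKT i.succ k ↔ WMTop i k := by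
  unfold CKT; rw [Fin.cases_succ]
lemma CKC_zero {n : ℕ} (k : Fin n → ℕ) : CKC 0 k ↔ k = 0 := Iff.rfl
lemma CKC_succ {n : ℕ} (i : Fin n) (k : Fin n → ℕ) : CKC i.succ k ↔ WMCanCreate i k := by
  unfold CKC; rw [Fin.cases_succ]

lemma hilbert_ext {F : Type*} [NormedAddCommGroup F] [InnerProductSpace ℂ F]
    [CompleteSpace F] {ι : Type*} (E : HilbertBasis ι ℂ F) {f g : F →L[ℂ] F}
    (h : ∀ i, f (E i) = g (E i)) : f = g := by
  refine ContinuousLinearMap.ext_on (s := Set.range E) ?_ ?_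
  · exact Submodule.dense_iff_topologicalClosure_eq_top.mpr E.dense_span
  · rintro x ⟨i, rfl⟩; exact h i

lemma wmDec_wmInc {n : ℕ} (k : Fin n → ℕ) (i : Fin n) : wmDec (wmInc k i) i = k := by
  funext j
  by_cases h : j = i
  · subst h; simp [wmDec, wmInc]
  · simp [wmDec, wmInc, Function.update_of_ne h]

lemma wmInc_wmDec {n : ℕ} (k : Fin n → ℕ) (i : Fin n) (h : 0 < k i) :
    wmInc (wmDec k i) i = k := by
  funext j
  by_cases hj : j = i
  · subst hj; simp [wmDec, wmInc]; omega
  · simp [wmDec, wmInc, Function.update_of_ne hj]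

lemma WMTop_wmInc {n : ℕ} {i : Fin n} {k : Fin n → ℕ} (h : WMCanCreate i k) :
    WMTop i (wmInc k i) := by
  refine ⟨by simp [wmInc], fun j hj => ?_⟩
  rw [wmInc, Function.update_of_ne (by rintro rfl; exact lt_irrefl _ hj)]
  exact h j hj

lemma WMCanCreate_wmDec {n : ℕ} {i : Fin n} {k : Fin n → ℕ} (h : WMCanCreate i k) :
    WMCanCreate i (wmDec k i) := by
  intro j hj
  rw [wmDec, Function.update_of_ne (by rintro rfl; exact lt_irrefl _ hj)]
  exact h j hj

lemma CKT_unique {n : ℕ} {i j : Fin (n + 1)} {k : Fin n → ℕ}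
    (hi : CKT i k) (hj : CKT j k) : i = j := by
  induction i using Fin.cases with
  | zero =>
    induction j using Fin.cases with
    | zero => rfl
    | succ j =>
      rw [CKT_zero] at hi; rw [CKT_succ] at hj
      exfalso; subst hi; simpa using hj.1
  | succ i =>
    induction j using Fin.cases with
    | zero =>
      rw [CKT_zero] at hj; rw [CKT_succ] at hi
      exfalso; subst hj; simpa using hi.1
    | succ j =>
      rw [CKT_succ] at hi hj
      congr 1
      by_contra hne
      rcases lt_or_gt_of_ne hne with h | h
      · exact absurd (hi.2 j h) (by have := hj.1; omega)
      · exact absurd (hj.2 i h) (by have := hi.1; omega)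

lemma CKC_iff {n : ℕ} (i : Fin (n + 1)) (k : Fin n → ℕ) :
    CKC i k ↔ ∃ j, j ≤ i ∧ CKT j k := by
  constructor
  · intro hi
    induction i using Fin.cases with
    | zero => exact ⟨0, le_refl _, (CKT_zero k).mpr ((CKC_zero k).mp hi)⟩
    | succ i =>
      rw [CKC_succ] at hi
      by_cases hk : k = 0
      · exact ⟨0, Fin.zero_le _, (CKT_zero k).mpr hk⟩
      · obtain ⟨m, hm⟩ := Function.ne_iff.mp hk
        set s : Finset (Fin n) := Finset.univ.filter (fun m => k m ≠ 0) with hs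
        have hsne : s.Nonempty :=
          ⟨m, by simp only [hs, Finset.mem_filter, Finset.mem_univ, true_and]; simpa using hm⟩
        set j₀ := s.max' hsne with hj₀
        have hj₀mem : j₀ ∈ s := s.max'_mem hsne
        have hj₀pos : 0 < k j₀ := by
          have := (Finset.mem_filter.mp hj₀mem).2; omega
        have htop : WMTop j₀ k := by
          refine ⟨hj₀pos, fun m' hm' => ?_⟩
          by_contra hne
          exact absurd (s.le_max' m' (by simp [hs, hne])) (by omega)
        have hle : j₀ ≤ i := by
          by_contra hgt
          exact absurd (hi j₀ (by omega)) (by omega)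
        exact ⟨j₀.succ, Fin.succ_le_succ_iff.mpr hle, (CKT_succ j₀ k).mpr htop⟩
  · rintro ⟨j, hle, hT⟩
    induction i using Fin.cases with
    | zero =>
      rw [Fin.le_zero_iff] at hle; subst hle
      exact (CKC_zero k).mpr ((CKT_zero k).mp hT)
    | succ i =>
      rw [CKC_succ]
      induction j using Fin.cases with
      | zero =>
        have hk := (CKT_zero k).mp hT
        intro m _; simp [hk]
      | succ j =>
        rw [CKT_succ] at hT
        rw [Fin.succ_le_succ_iff] at hle
        intro m hm
        exact hT.2 m (lt_of_le_of_lt hle hm)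

theorem cuntz_krieger_relations
    {n : ℕ} {F : Type*} [NormedAddCommGroup F] [InnerProductSpace ℂ F]
    [CompleteSpace F] (E : HilbertBasis (Fin n → ℕ) ℂ F)
    (A Ad : Fin n → F →L[ℂ] F)
    (hAdj : ∀ i, Ad i = ContinuousLinearMap.adjoint (A i))
    (hA : ∀ i k, A i (E k) = if WMTop i k then E (wmDec k i) else 0)
    (hAc : ∀ i k, Ad i (E k) = if WMCanCreate i k then E (wmInc k i) else 0)
    (hn : 0 < n)
    (P Q : Fin (n + 1) → F →L[ℂ] F)
    (hP0 : P 0 = A ⟨0, hn⟩ * Ad ⟨0, hn⟩ - Ad ⟨0, hn⟩ * A ⟨0, hn⟩)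
    (hPs : ∀ i : Fin n, P i.succ = Ad i * A i)
    (hQ0 : Q 0 = A ⟨0, hn⟩ * Ad ⟨0, hn⟩ - Ad ⟨0, hn⟩ * A ⟨0, hn⟩)
    (hQs : ∀ i : Fin n, Q i.succ = A i * Ad i)
    (a : Fin (n + 1) → Fin (n + 1) → ℂ)
    (ha : ∀ i j, a i j = if j ≤ i then 1 else 0)
    :
    (∀ i j : Fin (n + 1), i ≠ j → P i * P j = 0) ∧
      ∀ i : Fin (n + 1), Q i = ∑ j : Fin (n + 1), a i j • P j := by
  classical
  set z : Fin n := ⟨0, hn⟩ with hz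
  -- action of the "0-th" (vacuum) projection on basis vectors
  have hvac : ∀ k, (A z * Ad z - Ad z * A z) (E k) = if k = 0 then E k else 0 := by
    intro k
    rw [ContinuousLinearMap.sub_apply, ContinuousLinearMap.mul_apply,
      ContinuousLinearMap.mul_apply, hAc z k, hA z k]
    by_cases h1 : WMCanCreate z k
    · by_cases h2 : WMTop z k
      · rw [if_pos h1, if_pos h2, hA, hAc, if_pos (WMTop_wmInc h1),
          if_pos (WMCanCreate_wmDec h1), wmDec_wmInc, wmInc_wmDec k z h2.1, sub_self]
        rw [if_neg (by intro hk; rw [hk] at h2; exact absurd h2.1 (by simp))]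
      · have hk : k = 0 := by
          funext j
          show k j = 0
          by_cases hj : j = z
          · subst hj
            by_contra hne
            exact h2 ⟨by omega, h1⟩
          · have : z < j := by
              have : j.val ≠ 0 := fun h => hj (Fin.ext h)
              simp only [Fin.lt_def, hz]; omega
            exact h1 j this
        rw [if_pos h1, if_neg h2, hA, if_pos (WMTop_wmInc h1), wmDec_wmInc, map_zero,
          sub_zero, if_pos hk]
    · have h2 : ¬ WMTop z k := fun h => h1 h.2
      have hk : k ≠ 0 := fun hk => h1 (by intro j _; rw [hk]; rfl)
      rw [if_neg h1, if_neg h2, map_zero, map_zero, sub_zero, if_neg hk]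
  have hTP : ∀ (i : Fin (n + 1)) k, P i (E k) = if CKT i k then E k else 0 := by
    intro i k
    induction i using Fin.cases with
    | zero => rw [hP0, hvac k]; exact if_congr (CKT_zero k).symm rfl rfl
    | succ i =>
      rw [hPs, ContinuousLinearMap.mul_apply, hA]
      by_cases h : WMTop i k
      · rw [if_pos h, hAc, if_pos (WMCanCreate_wmDec h.2), wmInc_wmDec k i h.1,
          if_pos ((CKT_succ i k).mpr h)]
      · rw [if_neg h, map_zero, if_neg (fun hc => h ((CKT_succ i k).mp hc))]
  have hTQ : ∀ (i : Fin (n + 1)) k, Q i (E k) = if CKC i k then E k else 0 := by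
    intro i k
    induction i using Fin.cases with
    | zero => rw [hQ0, hvac k]; exact if_congr (CKC_zero k).symm rfl rfl
    | succ i =>
      rw [hQs, ContinuousLinearMap.mul_apply, hAc]
      by_cases h : WMCanCreate i k
      · rw [if_pos h, hA, if_pos (WMTop_wmInc h), wmDec_wmInc,
          if_pos ((CKC_succ i k).mpr h)]
      · rw [if_neg h, map_zero, if_neg (fun hc => h ((CKC_succ i k).mp hc))]
  constructor
  · intro i j hij
    refine hilbert_ext E (fun k => ?_)
    rw [ContinuousLinearMap.mul_apply, hTP j k]
    by_cases h : CKT j k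
    · rw [if_pos h, hTP i k, if_neg (fun h' => hij (CKT_unique h' h))]
      simp
    · rw [if_neg h, map_zero]; simp
  · intro i
    refine hilbert_ext E (fun k => ?_)
    rw [hTQ i k, ContinuousLinearMap.sum_apply]
    have hterm : ∀ j, (a i j • P j) (E k) = if j ≤ i ∧ CKT j k then E k else 0 := by
      intro j
      rw [ContinuousLinearMap.smul_apply, hTP j k, ha]
      by_cases h1 : j ≤ i <;> by_cases h2 : CKT j k <;>
        simp [h1, h2]
    rw [Finset.sum_congr rfl (fun j _ => hterm j)]
    by_cases hex : ∃ j, j ≤ i ∧ CKT j k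
    · obtain ⟨j₀, hle, hT⟩ := hex
      have hcc : CKC i k := (CKC_iff i k).mpr ⟨j₀, hle, hT⟩
      rw [if_pos hcc, Finset.sum_eq_single j₀
        (fun b _ hb => if_neg (fun hc => hb (CKT_unique hc.2 hT)))
        (fun habs => absurd (Finset.mem_univ j₀) habs)]
      exact (if_pos (show j₀ ≤ i ∧ CKT j₀ k from ⟨hle, hT⟩)).symm
    · rw [if_neg (fun hc => hex ((CKC_iff i k).mp hc)),
        Finset.sum_eq_zero (fun j _ => if_neg (fun hc => hex ⟨j, hc⟩))]
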